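/- arXiv:math/0509484 — 2 statements merged into one kernel-verified Lean document; each statement's English description precedes it below -/
import Mathlib

section
/- The number of integer solutions (x,y,z) ∈ ℤ³ to 20x² + 16xy + 16y² + 16z² = 16 is exactly 4. -/
theorem rQ2_sixteen :
    Set.ncard {p : ℤ × ℤ × ℤ |
      20 * p.1 ^ 2 + 16 * p.1 * p.2.1 + 16 * p.2.1 ^ 2 + 16 * p.2.2 ^ 2 = 16} = 4 := by
  have hset : {p : ℤ × ℤ × ℤ |
      20 * p.1 ^ 2 + 16 * p.1 * p.2.1 + 16 * p.2.1 ^ 2 + 16 * p.2.2 ^ 2 = 16} =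
      (↑({(0,1,0),(0,-1,0),(0,0,1),(0,0,-1)} : Finset (ℤ × ℤ × ℤ)) : Set (ℤ × ℤ × ℤ)) := by
    ext ⟨x, y, z⟩
    simp only [Set.mem_setOf_eq, Finset.coe_insert, Set.mem_insert_iff,
      Finset.coe_singleton, Set.mem_singleton_iff, Prod.mk.injEq]
    constructor
    · intro h
      have hx : -1 ≤ x ∧ x ≤ 1 := by
        constructor <;> nlinarith [sq_nonneg (x+y), sq_nonneg y, sq_nonneg z, sq_nonneg (x+1), sq_nonneg (x-1)]
      have hy : -1 ≤ y ∧ y ≤ 1 := by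
        constructor <;> nlinarith [sq_nonneg (x+y), sq_nonneg x, sq_nonneg z, sq_nonneg (y+1), sq_nonneg (y-1)]
      have hz : -1 ≤ z ∧ z ≤ 1 := by
        constructor <;> nlinarith [sq_nonneg (x+y), sq_nonneg x, sq_nonneg y, sq_nonneg (z+1), sq_nonneg (z-1)]
      obtain ⟨hx1, hx2⟩ := hx
      obtain ⟨hy1, hy2⟩ := hy
      obtain ⟨hz1, hz2⟩ := hz
      interval_cases x <;> interval_cases y <;> interval_cases z <;> omega
    · rintro (⟨rfl, rfl, rfl⟩ | ⟨rfl, rfl, rfl⟩ | ⟨rfl, rfl, rfl⟩ | ⟨rfl, rfl, rfl⟩) <;> ring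
  rw [hset, Set.ncard_coe_finset]
  decide
end

section
/- The integral automorphism group of Q2(x,y,z) = 20x² + 16xy + 16y² + 16z² has exactly 8 elements. -/
lemma colQ20 (a b c : ℤ) (h : (a*20+b*8)*a + (a*8+b*16)*b + c*16*c = 20) :
    (a = 1 ∧ b = 0 ∧ c = 0) ∨ (a = -1 ∧ b = 0 ∧ c = 0) ∨
    (a = 1 ∧ b = -1 ∧ c = 0) ∨ (a = -1 ∧ b = 1 ∧ c = 0) := by
  have ha1 : -1 ≤ a := by nlinarith [sq_nonneg (2*a+b), sq_nonneg b, sq_nonneg c, sq_nonneg (a+1)]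
  have ha2 : a ≤ 1 := by nlinarith [sq_nonneg (2*a+b), sq_nonneg b, sq_nonneg c, sq_nonneg (a-1)]
  have hb1 : -1 ≤ b := by nlinarith [sq_nonneg (a+b), sq_nonneg a, sq_nonneg c, sq_nonneg (b+1)]
  have hb2 : b ≤ 1 := by nlinarith [sq_nonneg (a+b), sq_nonneg a, sq_nonneg c, sq_nonneg (b-1)]
  have hc1 : -1 ≤ c := by nlinarith [sq_nonneg (2*a+b), sq_nonneg b, sq_nonneg a, sq_nonneg (c+1)]
  have hc2 : c ≤ 1 := by nlinarith [sq_nonneg (2*a+b), sq_nonneg b, sq_nonneg a, sq_nonneg (c-1)]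
  interval_cases a <;> interval_cases b <;> interval_cases c <;> omega

lemma colQ16 (a b c : ℤ) (h : (a*20+b*8)*a + (a*8+b*16)*b + c*16*c = 16) :
    (a = 0 ∧ b = 1 ∧ c = 0) ∨ (a = 0 ∧ b = -1 ∧ c = 0) ∨
    (a = 0 ∧ b = 0 ∧ c = 1) ∨ (a = 0 ∧ b = 0 ∧ c = -1) := by
  have ha1 : -1 ≤ a := by nlinarith [sq_nonneg (2*a+b), sq_nonneg b, sq_nonneg c, sq_nonneg (a+1)]
  have ha2 : a ≤ 1 := by nlinarith [sq_nonneg (2*a+b), sq_nonneg b, sq_nonneg c, sq_nonneg (a-1)]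
  have hb1 : -1 ≤ b := by nlinarith [sq_nonneg (a+b), sq_nonneg a, sq_nonneg c, sq_nonneg (b+1)]
  have hb2 : b ≤ 1 := by nlinarith [sq_nonneg (a+b), sq_nonneg a, sq_nonneg c, sq_nonneg (b-1)]
  have hc1 : -1 ≤ c := by nlinarith [sq_nonneg (2*a+b), sq_nonneg b, sq_nonneg a, sq_nonneg (c+1)]
  have hc2 : c ≤ 1 := by nlinarith [sq_nonneg (2*a+b), sq_nonneg b, sq_nonneg a, sq_nonneg (c-1)]
  interval_cases a <;> interval_cases b <;> interval_cases c <;> omega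

theorem Q2_automorphism_group_card :
    Set.ncard {A : Matrix (Fin 3) (Fin 3) ℤ | IsUnit A.det ∧
        A.transpose * !![(20 : ℤ), 8, 0; 8, 16, 0; 0, 0, 16] * A =
          !![(20 : ℤ), 8, 0; 8, 16, 0; 0, 0, 16]} = 8 := by
  have hset : {A : Matrix (Fin 3) (Fin 3) ℤ | IsUnit A.det ∧
        A.transpose * !![(20 : ℤ), 8, 0; 8, 16, 0; 0, 0, 16] * A =
          !![(20 : ℤ), 8, 0; 8, 16, 0; 0, 0, 16]} =
      ↑({!![(1:ℤ),0,0;0,1,0;0,0,1], !![(1:ℤ),0,0;0,1,0;0,0,-1],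
         !![(-1:ℤ),0,0;0,-1,0;0,0,1], !![(-1:ℤ),0,0;0,-1,0;0,0,-1],
         !![(1:ℤ),0,0;-1,-1,0;0,0,1], !![(1:ℤ),0,0;-1,-1,0;0,0,-1],
         !![(-1:ℤ),0,0;1,1,0;0,0,1], !![(-1:ℤ),0,0;1,1,0;0,0,-1]} :
        Finset (Matrix (Fin 3) (Fin 3) ℤ)) := by
    ext A
    simp only [Set.mem_setOf_eq, Finset.coe_insert, Set.mem_insert_iff,
      Finset.coe_singleton, Set.mem_singleton_iff]
    constructor
    · rintro ⟨-, h⟩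
      have h00 := congrFun (congrFun h 0) 0
      have h01 := congrFun (congrFun h 0) 1
      have h02 := congrFun (congrFun h 0) 2
      have h11 := congrFun (congrFun h 1) 1
      have h12 := congrFun (congrFun h 1) 2
      have h22 := congrFun (congrFun h 2) 2
      simp [Matrix.mul_apply, Fin.sum_univ_three] at h00 h01 h02 h11 h12 h22
      rcases colQ20 _ _ _ h00 with ⟨e1,e2,e3⟩|⟨e1,e2,e3⟩|⟨e1,e2,e3⟩|⟨e1,e2,e3⟩ <;>
      rcases colQ16 _ _ _ h11 with ⟨f1,f2,f3⟩|⟨f1,f2,f3⟩|⟨f1,f2,f3⟩|⟨f1,f2,f3⟩ <;>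
      rcases colQ16 _ _ _ h22 with ⟨g1,g2,g3⟩|⟨g1,g2,g3⟩|⟨g1,g2,g3⟩|⟨g1,g2,g3⟩ <;>
      simp only [e1, e2, e3, f1, f2, f3, g1, g2, g3] at h01 h02 h12 <;>
      first
        | omega
        | (rw [Matrix.eta_fin_three A]
           simp only [e1, e2, e3, f1, f2, f3, g1, g2, g3]
           decide)
    · rintro (rfl|rfl|rfl|rfl|rfl|rfl|rfl|rfl) <;>
        exact ⟨by rw [Int.isUnit_iff]; decide, by decide⟩
  rw [hset, Set.ncard_coe_finset]
  decide
end
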